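/- Let β ∈ M_d(ℝ), α ∈ S_d^+, p ≥ 0, and define σ_t(α) := 2∫₀ᵗ e^{βs} α e^{βᵀ s} ds and ψ(t,u) := e^{βᵀ t}(u⁻¹ + σ_t(α))⁻¹ e^{β t} for u ∈ S_d^{++}. Then φ(t,u) := p · log det(I + u σ_t(α)) satisfies ∂φ/∂t = 2p · tr(α ψ(t,u)) with φ(0,u) = 0. -/

import Mathlib

open Matrix MeasureTheory

attribute [local instance] Matrix.normedAddCommGroup Matrix.normedSpace

/-- `σ_t(α) = 2 ∫₀ᵗ e^{β s} α e^{βᵀ s} ds`. -/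
noncomputable def sigmaFlow {d : ℕ} (β α : Matrix (Fin d) (Fin d) ℝ) (t : ℝ) :
    Matrix (Fin d) (Fin d) ℝ :=
  (2 : ℝ) • ∫ s in (0 : ℝ)..t,
    NormedSpace.exp (s • β) * α * NormedSpace.exp (s • βᵀ)

/-- `ψ(t, u) = e^{βᵀ t} (u⁻¹ + σ_t(α))⁻¹ e^{β t}`. -/
noncomputable def riccatiPsi {d : ℕ} (β α : Matrix (Fin d) (Fin d) ℝ) (t : ℝ)
    (u : Matrix (Fin d) (Fin d) ℝ) : Matrix (Fin d) (Fin d) ℝ :=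
  NormedSpace.exp (t • βᵀ) * (u⁻¹ + sigmaFlow β α t)⁻¹ * NormedSpace.exp (t • β)

/-- `φ(t, u) = p log det (I + u σ_t(α))`. -/
noncomputable def riccatiPhi {d : ℕ} (p : ℝ) (β α : Matrix (Fin d) (Fin d) ℝ) (t : ℝ)
    (u : Matrix (Fin d) (Fin d) ℝ) : ℝ :=
  p * Real.log (1 + u * sigmaFlow β α t).det

/-!
Factor `1 + u σ_t = u (u⁻¹ + σ_t)`. For `t ≥ 0` the matrix `σ_t` is an integral of the
positive semidefinite matrices `e^{βs} α (e^{βs})ᵀ`, so `u⁻¹ + σ_t` is positive definite and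
`det (1 + u σ_t)` does not vanish. Jacobi's formula `(log det A)' = tr (A⁻¹ A')` together with
`σ_t' = 2 e^{βt} α e^{βᵀt}` then gives `2p tr ((u⁻¹ + σ_t)⁻¹ e^{βt} α e^{βᵀt})`, which is
`2p tr (α ψ(t, u))` by cyclicity of the trace.
-/

namespace Matrix

variable {n : Type*} [Fintype n]

section Jacobi

variable [DecidableEq n]

theorem det_updateRow_eq_mul_adjugate_apply {R : Type*} [CommRing R] (M B : Matrix n n R)
    (j : n) : (M.updateRow j (B j)).det = (B * M.adjugate) j j := by
  rw [← det_transpose, ← updateCol_transpose, ← cramer_apply, cramer_eq_adjugate_mulVec,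
    ← adjugate_transpose, mulVec_transpose, vecMul, mul_apply, dotProduct]

theorem trace_adjugate_mul {R : Type*} [CommRing R] (M B : Matrix n n R) :
    (M.adjugate * B).trace = ∑ j, (M.updateRow j (B j)).det := by
  rw [trace_mul_comm]
  simp only [trace, diag_apply, det_updateRow_eq_mul_adjugate_apply]

variable {𝕜 : Type*} [NontriviallyNormedField 𝕜]

variable (n 𝕜) in
noncomputable def detContinuousMultilinearMap :
    ContinuousMultilinearMap 𝕜 (fun _ : n => n → 𝕜) 𝕜 where
  toMultilinearMap := (detRowAlternating : (n → 𝕜) [⋀^n]→ₗ[𝕜] 𝕜).toMultilinearMap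
  cont := continuous_id.matrix_det

theorem _root_.HasDerivAt.matrix_det {A : 𝕜 → Matrix n n 𝕜} {A' : Matrix n n 𝕜} {t : 𝕜}
    (h : HasDerivAt A A' t) :
    HasDerivAt (fun s => (A s).det) ((A t).adjugate * A').trace t := by
  have h_comp : HasDerivAt (fun s => (A s).det)
      ((detContinuousMultilinearMap n 𝕜).linearDeriv (A t) A') t :=
    ((detContinuousMultilinearMap n 𝕜).hasFDerivAt (A t)).comp_hasDerivAt t h
  refine h_comp.congr_deriv ?_
  rw [trace_adjugate_mul]
  exact (detContinuousMultilinearMap n 𝕜).linearDeriv_apply (A t) A'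

theorem _root_.HasDerivAt.log_det {A : ℝ → Matrix n n ℝ} {A' : Matrix n n ℝ} {t : ℝ}
    (h : HasDerivAt A A' t) (hA : (A t).det ≠ 0) :
    HasDerivAt (fun s => Real.log (A s).det) ((A t)⁻¹ * A').trace t := by
  refine (h.matrix_det.log hA).congr_deriv ?_
  rw [inv_def, Ring.inverse_eq_inv', smul_mul, trace_smul, smul_eq_mul, div_eq_inv_mul]

end Jacobi

theorem _root_.HasDerivAt.const_matrix_mul {𝕜 : Type*} [NontriviallyNormedField 𝕜]
    [CompleteSpace 𝕜] {f : 𝕜 → Matrix n n 𝕜} {f' : Matrix n n 𝕜} {t : 𝕜}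
    (h : HasDerivAt f f' t) (u : Matrix n n 𝕜) :
    HasDerivAt (fun s => u * f s) (u * f') t :=
  (LinearMap.mulLeft 𝕜 u).toContinuousLinearMap.hasFDerivAt.comp_hasDerivAt t h

theorem PosSemidef.intervalIntegral {f : ℝ → Matrix n n ℝ} {a b : ℝ} (hab : a ≤ b)
    (hf : ContinuousOn f (Set.Icc a b)) (hpsd : ∀ s ∈ Set.Icc a b, (f s).PosSemidef) :
    (∫ s in a..b, f s).PosSemidef := by
  have hint := hf.intervalIntegrable_of_Icc (μ := volume) hab
  refine posSemidef_iff_dotProduct_mulVec.mpr ⟨?_, fun x => ?_⟩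
  · let L := LinearMap.toContinuousLinearMap (transposeLinearEquiv n n ℝ ℝ).toLinearMap
    have hcomm : (∫ s in a..b, L (f s)) = L (∫ s in a..b, f s) :=
      L.intervalIntegral_comp_comm hint
    rw [IsHermitian, conjTranspose_eq_transpose_of_trivial]
    refine hcomm.symm.trans (intervalIntegral.integral_congr fun s hs => ?_)
    rw [Set.uIcc_of_le hab] at hs
    exact (conjTranspose_eq_transpose_of_trivial _).symm.trans (hpsd s hs).isHermitian
  · let L := LinearMap.toContinuousLinearMap
      { toFun := fun M : Matrix n n ℝ => star x ⬝ᵥ M *ᵥ x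
        map_add' := fun M N => by simp only [add_mulVec, dotProduct_add]
        map_smul' := fun (c : ℝ) M => by
          simp only [smul_mulVec, dotProduct_smul, RingHom.id_apply] }
    have hcomm : (∫ s in a..b, L (f s)) = L (∫ s in a..b, f s) :=
      L.intervalIntegral_comp_comm hint
    change 0 ≤ L (∫ s in a..b, f s)
    rw [← hcomm]
    exact intervalIntegral.integral_nonneg hab fun s hs => (hpsd s hs).dotProduct_mulVec_nonneg x

theorem continuous_exp_smul [DecidableEq n] (β : Matrix n n ℝ) :
    Continuous fun s : ℝ => NormedSpace.exp (s • β) := by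
  -- `NormedSpace.exp` needs a submultiplicative norm; the ambient sup norm is not one.
  let _ : NormedAddCommGroup (Matrix n n ℝ) := Matrix.linftyOpNormedAddCommGroup
  let _ : NormedRing (Matrix n n ℝ) := Matrix.linftyOpNormedRing
  let _ : NormedAlgebra ℝ (Matrix n n ℝ) := Matrix.linftyOpNormedAlgebra
  exact continuous_iff_continuousAt.2 fun t => (hasDerivAt_exp_smul_const β t).continuousAt

end Matrix

section RiccatiFlow

variable {d : ℕ} (β α : Matrix (Fin d) (Fin d) ℝ)

theorem continuous_sigmaFlow_integrand :
    Continuous fun s : ℝ => NormedSpace.exp (s • β) * α * NormedSpace.exp (s • βᵀ) :=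
  ((continuous_exp_smul β).matrix_mul continuous_const).matrix_mul (continuous_exp_smul βᵀ)

theorem sigmaFlow_zero : sigmaFlow β α 0 = 0 := by
  simp [sigmaFlow]

theorem hasDerivAt_sigmaFlow (t : ℝ) :
    HasDerivAt (sigmaFlow β α)
      ((2 : ℝ) • (NormedSpace.exp (t • β) * α * NormedSpace.exp (t • βᵀ))) t :=
  ((continuous_sigmaFlow_integrand β α).integral_hasStrictDerivAt 0 t).hasDerivAt.const_smul
    (2 : ℝ)

variable {α} in
theorem posSemidef_sigmaFlow (hα : α.PosSemidef) {t : ℝ} (ht : 0 ≤ t) :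
    (sigmaFlow β α t).PosSemidef := by
  refine .smul (PosSemidef.intervalIntegral ht
    (continuous_sigmaFlow_integrand β α).continuousOn fun s _ => ?_) zero_le_two
  rw [← transpose_smul, exp_transpose, ← conjTranspose_eq_transpose_of_trivial]
  exact hα.mul_mul_conjTranspose_same _

theorem trace_mul_riccatiPsi (t : ℝ) (u : Matrix (Fin d) (Fin d) ℝ) :
    (α * riccatiPsi β α t u).trace =
      ((u⁻¹ + sigmaFlow β α t)⁻¹ *
        (NormedSpace.exp (t • β) * α * NormedSpace.exp (t • βᵀ))).trace := by
  rw [riccatiPsi, ← Matrix.mul_assoc, ← Matrix.mul_assoc, trace_mul_comm, ← Matrix.mul_assoc,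
    trace_mul_comm]
  simp only [Matrix.mul_assoc]

end RiccatiFlow

theorem stmt_9_general {d : ℕ} (β α u : Matrix (Fin d) (Fin d) ℝ) (p : ℝ)
    (hα : α.PosSemidef) (hu : u.PosDef) :
    riccatiPhi p β α 0 u = 0 ∧
    ∀ t : ℝ, 0 ≤ t →
      HasDerivWithinAt (fun s => riccatiPhi p β α s u)
        (2 * p * (α * riccatiPsi β α t u).trace) (Set.Ici 0) t := by
  refine ⟨by simp [riccatiPhi, sigmaFlow_zero], fun t ht => ?_⟩
  set B := u⁻¹ + sigmaFlow β α t
  have hu_det : IsUnit u.det := hu.det_pos.ne'.isUnit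
  have hB : B.PosDef := hu.inv.add_posSemidef (posSemidef_sigmaFlow β hα ht)
  have h_factor : 1 + u * sigmaFlow β α t = u * B := by
    rw [Matrix.mul_add, mul_nonsing_inv u hu_det]
  have h_det : (1 + u * sigmaFlow β α t).det ≠ 0 := by
    rw [h_factor, det_mul]
    exact mul_ne_zero hu.det_pos.ne' hB.det_pos.ne'
  have h_deriv :=
    ((((hasDerivAt_sigmaFlow β α t).const_matrix_mul u).const_add 1).log_det h_det).const_mul p
  refine (h_deriv.congr_deriv ?_).hasDerivWithinAt
  rw [h_factor, Matrix.mul_inv_rev, Matrix.mul_assoc, nonsing_inv_mul_cancel_left _ _ hu_det,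
    mul_smul_comm, trace_smul, trace_mul_riccatiPsi, smul_eq_mul]
  ring

theorem stmt_9 {d : ℕ} (β α u : Matrix (Fin d) (Fin d) ℝ) (p : ℝ) (hp : 0 ≤ p)
    (hα : α.PosSemidef) (hu : u.PosDef) :
    riccatiPhi p β α 0 u = 0 ∧
    ∀ t : ℝ, 0 ≤ t →
      HasDerivWithinAt (fun s => riccatiPhi p β α s u)
        (2 * p * (α * riccatiPsi β α t u).trace) (Set.Ici 0) t :=
  stmt_9_general β α u p hα hu
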